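/- arXiv:2207.05014 — 5 statements merged into one kernel-verified Lean document; each statement's English description precedes it below -/
import Mathlib

section
/- For any point ŷ feasible to the follower constraints (ŷ ∈ 𝒴 ∩ ℤ^{n₂}), the set S(ŷ) = {(x,y) : Ax ≥ f − Bŷ and q(y) > q(ŷ)} contains no bilevel-feasible solution, i.e., for every (x,y) ∈ S(ŷ) with y ∈ Ω(x), a contradiction follows. -/
open Matrix

/-- If yh is a feasible follower point, then no (x,y) in
S(yh) = {(x,y) : Ax ≥ f − Byh, q(y) > q(yh)} can be bilevel feasible (y ∈ Ω(x)). -/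
theorem stmt0 {n1 n2 m2 : ℕ}
    (A : Matrix (Fin m2) (Fin n1) ℝ) (B : Matrix (Fin m2) (Fin n2) ℝ)
    (f : Fin m2 → ℝ) (Y : Set (Fin n2 → ℝ)) (q : (Fin n2 → ℝ) → ℝ)
    (yh : Fin n2 → ℝ) (hyhY : yh ∈ Y) (hyhint : ∀ j, ∃ k : ℤ, yh j = (k : ℝ))
    (x : Fin n1 → ℝ) (y : Fin n2 → ℝ)
    (hAx : ∀ i, A.mulVec x i ≥ f i - B.mulVec yh i)
    (hq : q y > q yh)
    (hyInt : ∀ j, ∃ k : ℤ, y j = (k : ℝ)) (hyY : y ∈ Y)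
    (hyFeas : ∀ i, A.mulVec x i + B.mulVec y i ≥ f i)
    (hyOpt : ∀ z, (∀ j, ∃ k : ℤ, z j = (k : ℝ)) → z ∈ Y →
      (∀ i, A.mulVec x i + B.mulVec z i ≥ f i) → q y ≤ q z) :
    False := by
  have h := hyOpt yh hyhint hyhY (fun i => by have := hAx i; linarith)
  linarith
end

section
/- If (x,y) is an integer point lying in the interior of the extended set S⁺(ŷ) = {(x,y) : Ax ≥ f − Bŷ − 1, q(y) ≥ q(ŷ)} (interior meaning all inequalities are strict), then (x,y) ∈ S(ŷ) = {(x,y) : Ax ≥ f − Bŷ, q(y) > q(ŷ)}. Consequently S⁺(ŷ) contains no bilevel-feasible solution in its interior. -/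
open Matrix

/-- an integer point strictly inside S⁺(yh) lies in S(yh);
consequently S⁺(yh) contains no bilevel-feasible solution in its interior. -/
theorem stmt1 {n1 n2 m2 : ℕ}
    (A : Matrix (Fin m2) (Fin n1) ℤ) (B : Matrix (Fin m2) (Fin n2) ℤ)
    (f : Fin m2 → ℤ) (Y : Set (Fin n2 → ℤ)) (q : (Fin n2 → ℤ) → ℝ)
    (yh : Fin n2 → ℤ) (hyhY : yh ∈ Y)
    (x : Fin n1 → ℤ) (y : Fin n2 → ℤ)
    (hstrict1 : ∀ i, A.mulVec x i > f i - B.mulVec yh i - 1)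
    (hstrict2 : q y > q yh) :
    ((∀ i, A.mulVec x i ≥ f i - B.mulVec yh i) ∧ q y > q yh) ∧
      ¬ (y ∈ Y ∧ (∀ i, A.mulVec x i + B.mulVec y i ≥ f i) ∧
          ∀ z ∈ Y, (∀ i, A.mulVec x i + B.mulVec z i ≥ f i) → q y ≤ q z) := by
  have h1 : ∀ i, A.mulVec x i ≥ f i - B.mulVec yh i := fun i => by
    have := hstrict1 i; omega
  refine ⟨⟨h1, hstrict2⟩, ?_⟩
  rintro ⟨hy, hfeas, hopt⟩
  have : q y ≤ q yh := hopt yh hyhY (fun i => by have := h1 i; omega)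
  linarith
end

section
/- For any ŷ ∈ 𝒴 ∩ ℤ^{n₂}, every bilevel-feasible solution (x,y) satisfies the disjunction 𝒟₀(ŷ) ∨ 𝒟₁(ŷ) ∨ … ∨ 𝒟_{m₂}(ŷ), where 𝒟₀(ŷ) : q(y) ≤ q(ŷ) and 𝒟ᵢ(ŷ) : Aⁱx ≤ fᵢ − Bⁱŷ − 1 for i = 1,…,m₂ (Aⁱ, Bⁱ being the i-th rows of A, B). -/
open Matrix

/-- every bilevel-feasible (x,y) satisfies the disjunction
𝒟₀(yh) : q(y) ≤ q(yh)  or  𝒟ᵢ(yh) : Aⁱx ≤ fᵢ − Bⁱyh − 1 for some i. -/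
theorem stmt2 {n1 n2 m2 : ℕ}
    (A : Matrix (Fin m2) (Fin n1) ℤ) (B : Matrix (Fin m2) (Fin n2) ℤ)
    (f : Fin m2 → ℤ) (Y : Set (Fin n2 → ℤ)) (q : (Fin n2 → ℤ) → ℝ)
    (yh : Fin n2 → ℤ) (hyhY : yh ∈ Y)
    (x : Fin n1 → ℤ) (y : Fin n2 → ℤ)
    (hyY : y ∈ Y)
    (hyFeas : ∀ i, A.mulVec x i + B.mulVec y i ≥ f i)
    (hyOpt : ∀ z ∈ Y, (∀ i, A.mulVec x i + B.mulVec z i ≥ f i) → q y ≤ q z) :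
    q y ≤ q yh ∨ ∃ i, A.mulVec x i ≤ f i - B.mulVec yh i - 1 := by
  by_cases h : ∃ i, A.mulVec x i ≤ f i - B.mulVec yh i - 1
  · exact Or.inr h
  · left
    push_neg at h
    exact hyOpt yh hyhY (fun i => by have := h i; omega)
end

section
/- Let (x*,y*) be an extreme point of 𝒫 (a convex subset of the feasible region of the continuous HPR relaxation) and suppose ŷ ∈ F(x*) with q(ŷ) < q(y*). Then (x*,y*) ∉ 𝒟(ŷ,𝒫) := conv( {(x,y) ∈ 𝒫 : q(y) ≤ q(ŷ)} ∪ ⋃_{i=1}^{m₂} {(x,y) ∈ 𝒫 : Aⁱx ≤ fᵢ − Bⁱŷ − 1} ), so there exists a linear inequality α'x + β'y ≥ τ valid for 𝒟(ŷ,𝒫) and violated by (x*,y*). -/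
/-!
The point `(x*, y*)` lies in neither part of the disjunction: `q(ŷ) < q(y*)` rules out the first,
and feasibility of `ŷ` at `x*` gives `Aⁱx* ≥ fᵢ - Bⁱŷ > fᵢ - Bⁱŷ - 1` for the others. All parts lie
in the convex set `𝒫`, and an extreme point of `𝒫` inside the convex hull of a subset of `𝒫` must
belong to that subset, so `(x*, y*)` is outside the hull. The parts are compact, so by
Carathéodory the hull is compact, hence closed, and Hahn–Banach separates `(x*, y*)` from it.
-/

open Matrix

theorem exists_dotProduct_add_dotProduct_eq {R ι κ : Type*} [CommSemiring R] [Fintype ι]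
    [Fintype κ] (g : (ι → R) × (κ → R) →ₗ[R] R) :
    ∃ (α : ι → R) (β : κ → R), ∀ p, g p = α ⬝ᵥ p.1 + β ⬝ᵥ p.2 := by
  classical
  refine ⟨(dotProductEquiv R ι).symm (g ∘ₗ .inl R _ _),
    (dotProductEquiv R κ).symm (g ∘ₗ .inr R _ _), fun p => ?_⟩
  conv_lhs => rw [← g.coprod_comp_inl_inr]
  simp only [LinearMap.coprod_apply]
  rw [← dotProductEquiv_apply_apply, ← dotProductEquiv_apply_apply, LinearEquiv.apply_symm_apply,
    LinearEquiv.apply_symm_apply]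

theorem convexHull_range_eq_image_stdSimplex {ι E : Type*} [Fintype ι] [AddCommGroup E]
    [Module ℝ E] (z : ι → E) :
    convexHull ℝ (Set.range z) = (fun w : ι → ℝ => ∑ i, w i • z i) '' stdSimplex ℝ ι := by
  classical
  change _ = Fintype.linearCombination ℝ z '' _
  rw [← convexHull_basis_eq_stdSimplex, LinearMap.image_convexHull, ← Set.range_comp]
  congr 1
  ext i
  simp [Fintype.linearCombination_apply, ite_smul]

protected theorem IsCompact.convexHull {E : Type*} [NormedAddCommGroup E] [NormedSpace ℝ E]
    [FiniteDimensional ℝ E] {s : Set E} (hs : IsCompact s) :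
    IsCompact (convexHull ℝ s) := by
  classical
  set N := Module.finrank ℝ E + 1
  suffices convexHull ℝ s = (fun p : (Fin N → ℝ) × (Fin N → E) => ∑ i, p.1 i • p.2 i) ''
      stdSimplex ℝ (Fin N) ×ˢ Set.univ.pi fun _ => s by
    rw [this]
    exact ((isCompact_stdSimplex ℝ _).prod (isCompact_univ_pi fun _ => hs)).image
      (by fun_prop)
  apply subset_antisymm
  · intro x hx
    rw [convexHull_eq_union] at hx
    simp only [Set.mem_iUnion] at hx
    obtain ⟨t, hts, hti, hxt⟩ := hx
    have hcard : Fintype.card t ≤ N := hti.card_le_finrank_succ.trans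
      (Nat.succ_le_succ (Submodule.finrank_le _))
    obtain ⟨e⟩ : Nonempty (t ↪ Fin N) := by
      rwa [Function.Embedding.nonempty_iff_card_le, Fintype.card_fin]
    have : Nonempty t := (convexHull_nonempty_iff.1 ⟨x, hxt⟩).to_subtype
    set z : Fin N → E := (↑) ∘ Function.invFun e
    have hz : Set.range z = t := by
      rw [Set.range_comp, (Function.invFun_surjective e.injective).range_eq, Set.image_univ,
        Subtype.range_coe]
    rw [← hz, convexHull_range_eq_image_stdSimplex] at hxt
    obtain ⟨w, hw, rfl⟩ := hxt
    exact ⟨(w, z), ⟨hw, fun i _ => hts (hz ▸ Set.mem_range_self i)⟩, rfl⟩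
  · rintro _ ⟨⟨w, z⟩, ⟨hw, hz⟩, rfl⟩
    have : ∑ i, w i • z i ∈ convexHull ℝ (Set.range z) :=
      convexHull_range_eq_image_stdSimplex z ▸ ⟨w, hw, rfl⟩
    exact convexHull_mono (Set.range_subset_iff.2 fun i => hz i trivial) this

theorem mem_of_mem_extremePoints_of_mem_convexHull {𝕜 E : Type*} [Field 𝕜] [LinearOrder 𝕜]
    [IsStrictOrderedRing 𝕜] [AddCommGroup E] [Module 𝕜 E] {P S : Set E} {x : E}
    (hx : x ∈ P.extremePoints 𝕜) (hP : Convex 𝕜 P) (hSP : S ⊆ P) (hxS : x ∈ convexHull 𝕜 S) :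
    x ∈ S :=
  extremePoints_convexHull_subset <|
    inter_extremePoints_subset_extremePoints_of_subset (convexHull_min hSP hP) ⟨hxS, hx⟩

theorem exists_dotProduct_separation {ι κ : Type*} [Fintype ι] [Fintype κ]
    {C : Set ((ι → ℝ) × (κ → ℝ))} (hC : Convex ℝ C) (hCc : IsClosed C) {p : (ι → ℝ) × (κ → ℝ)}
    (hp : p ∉ C) :
    ∃ (α : ι → ℝ) (β : κ → ℝ) (τ : ℝ),
      (∀ q ∈ C, τ < α ⬝ᵥ q.1 + β ⬝ᵥ q.2) ∧ α ⬝ᵥ p.1 + β ⬝ᵥ p.2 < τ := by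
  obtain ⟨g, τ, hgp, hgC⟩ := geometric_hahn_banach_point_closed hC hCc hp
  obtain ⟨α, β, hg⟩ := exists_dotProduct_add_dotProduct_eq g.toLinearMap
  exact ⟨α, β, τ, fun q hq => hg q ▸ hgC q hq, hg p ▸ hgp⟩

theorem stmt6_general {n1 n2 m2 : ℕ}
    (A : Matrix (Fin m2) (Fin n1) ℝ) (B : Matrix (Fin m2) (Fin n2) ℝ)
    (f : Fin m2 → ℝ) (q : (Fin n2 → ℝ) → ℝ)
    (hqcont : Continuous q)
    (P : Set ((Fin n1 → ℝ) × (Fin n2 → ℝ))) (hPconv : Convex ℝ P)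
    (hPcomp : IsCompact P)
    (xs : Fin n1 → ℝ) (ys : Fin n2 → ℝ)
    (hext : (xs, ys) ∈ Set.extremePoints ℝ P)
    (yh : Fin n2 → ℝ)
    (hyhfeas : ∀ i, A.mulVec xs i + B.mulVec yh i ≥ f i)
    (hq : q yh < q ys) :
    (xs, ys) ∉ convexHull ℝ ({p ∈ P | q p.2 ≤ q yh} ∪
        ⋃ i, {p ∈ P | A.mulVec p.1 i ≤ f i - B.mulVec yh i - 1}) ∧
      ∃ (α : Fin n1 → ℝ) (β : Fin n2 → ℝ) (τ : ℝ),
        (∀ p ∈ convexHull ℝ ({p ∈ P | q p.2 ≤ q yh} ∪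
            ⋃ i, {p ∈ P | A.mulVec p.1 i ≤ f i - B.mulVec yh i - 1}),
          α ⬝ᵥ p.1 + β ⬝ᵥ p.2 ≥ τ) ∧
        α ⬝ᵥ xs + β ⬝ᵥ ys < τ := by
  set S := {p ∈ P | q p.2 ≤ q yh} ∪ ⋃ i, {p ∈ P | A.mulVec p.1 i ≤ f i - B.mulVec yh i - 1}
  have hSP : S ⊆ P :=
    Set.union_subset (Set.sep_subset _ _) (Set.iUnion_subset fun _ => Set.sep_subset _ _)
  have hnotS : (xs, ys) ∉ S := by
    rintro (⟨-, hle⟩ | hmem)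
    · exact hle.not_gt hq
    · obtain ⟨i, -, hi⟩ := Set.mem_iUnion.1 hmem
      linarith [hyhfeas i]
  have hScomp : IsCompact S := by
    have hAcont (i : Fin m2) :
        Continuous fun p : (Fin n1 → ℝ) × (Fin n2 → ℝ) => A.mulVec p.1 i := by
      fun_prop
    exact (hPcomp.inter_right (isClosed_le (hqcont.comp continuous_snd) continuous_const)).union
      (isCompact_iUnion fun i => hPcomp.inter_right (isClosed_le (hAcont i) continuous_const))
  have hnot : (xs, ys) ∉ convexHull ℝ S := fun h =>
    hnotS (mem_of_mem_extremePoints_of_mem_convexHull hext hPconv hSP h)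
  obtain ⟨α, β, τ, hvalid, hviol⟩ :=
    exists_dotProduct_separation (convex_convexHull ℝ S) hScomp.convexHull.isClosed hnot
  exact ⟨hnot, α, β, τ, fun p hp => (hvalid p hp).le, hviol⟩

/-- an extreme point (x*,y*) of 𝒫 with yh ∈ F(x*) and q(yh) < q(y*)
is not in 𝒟(yh,𝒫), so a disjunctive cut α'x + β'y ≥ τ violated by (x*,y*) exists. -/
theorem stmt6 {n1 n2 m2 : ℕ}
    (A : Matrix (Fin m2) (Fin n1) ℝ) (B : Matrix (Fin m2) (Fin n2) ℝ)
    (f : Fin m2 → ℝ) (Y : Set (Fin n2 → ℝ)) (q : (Fin n2 → ℝ) → ℝ)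
    (hqcont : Continuous q)
    (P : Set ((Fin n1 → ℝ) × (Fin n2 → ℝ))) (hPconv : Convex ℝ P)
    (hPcomp : IsCompact P)
    (xs : Fin n1 → ℝ) (ys : Fin n2 → ℝ)
    (hext : (xs, ys) ∈ Set.extremePoints ℝ P)
    (yh : Fin n2 → ℝ) (hyhint : ∀ j, ∃ k : ℤ, yh j = (k : ℝ)) (hyhY : yh ∈ Y)
    (hyhfeas : ∀ i, A.mulVec xs i + B.mulVec yh i ≥ f i)
    (hq : q yh < q ys) :
    (xs, ys) ∉ convexHull ℝ ({p ∈ P | q p.2 ≤ q yh} ∪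
        ⋃ i, {p ∈ P | A.mulVec p.1 i ≤ f i - B.mulVec yh i - 1}) ∧
      ∃ (α : Fin n1 → ℝ) (β : Fin n2 → ℝ) (τ : ℝ),
        (∀ p ∈ convexHull ℝ ({p ∈ P | q p.2 ≤ q yh} ∪
            ⋃ i, {p ∈ P | A.mulVec p.1 i ≤ f i - B.mulVec yh i - 1}),
          α ⬝ᵥ p.1 + β ⬝ᵥ p.2 ≥ τ) ∧
        α ⬝ᵥ xs + β ⬝ᵥ ys < τ :=
  stmt6_general A B f q hqcont P hPconv hPcomp xs ys hext yh hyhfeas hq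
end

section
/- Let U B be the objective value c'x̄ + d'ȳ of a known bilevel-feasible solution (x̄,ȳ), and let Ū_i = min{c'x + d'y : (x,y) ∈ 𝒫 ∩ 𝒟ᵢ(ŷ) ∩ ℤⁿ}. If Ū_i ≥ U B, then every bilevel-feasible solution strictly better than U B lies in conv((𝒫 ∩ 𝒟₀(ŷ)) ∪ ⋃_{j≠i, j≥1}(𝒫 ∩ 𝒟ⱼ(ŷ))); i.e., the disjunction 𝒟ᵢ(ŷ) is redundant and no bilevel-feasible solution with objective value < U B is lost when removing it. -/
open Matrix

/-- optimality-based removal of a redundant disjunction: if every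
integer point of 𝒫 ∩ 𝒟ᵢ has objective value ≥ UB, then every bilevel-feasible
solution strictly better than UB lies in the convex hull of the remaining pieces. -/
theorem stmt9 {n m2 : ℕ} (P : Set (Fin n → ℝ)) (D : Fin (m2 + 1) → Set (Fin n → ℝ))
    (BF : (Fin n → ℝ) → Prop) (c : Fin n → ℝ)
    (hBF : ∀ p, BF p → p ∈ P ∧ (∀ k, ∃ z : ℤ, p k = (z : ℝ)) ∧ ∃ j, p ∈ D j)
    (UB : ℝ) (pbar : Fin n → ℝ) (hpbar : BF pbar) (hUB : UB = c ⬝ᵥ pbar)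
    (i : Fin (m2 + 1)) (hi : i ≠ 0)
    (hUi : ∀ p ∈ P ∩ D i, (∀ k, ∃ z : ℤ, p k = (z : ℝ)) → UB ≤ c ⬝ᵥ p) :
    ∀ p, BF p → c ⬝ᵥ p < UB →
      p ∈ convexHull ℝ (⋃ j ∈ ({j | j ≠ i} : Set (Fin (m2 + 1))), P ∩ D j) := by
  intro p hp hlt
  obtain ⟨hP, hint, j, hj⟩ := hBF p hp
  have hji : j ≠ i := by
    intro h
    subst h
    exact absurd (hUi p ⟨hP, hj⟩ hint) (not_le.mpr hlt)
  apply subset_convexHull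
  exact Set.mem_biUnion hji ⟨hP, hj⟩
end
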